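/- Suppose the linear functional ⟨·⟩ is reflection positive for reflections through edges and the two-point function G_L is torus symmetric. For i ∈ {1,…,d} define G^{e_i}_L(x) := ½ ( G_L(o, x) + G_L(o, (x·e_i)·e_i) ). Then for any z ∈ T_L and any integer q ≥ 1 such that z·e_i + q is odd and both z·e_i − q and z·e_i + q lie in the interval (0, L), one has G^{e_i}_L(z + q·e_i) − G^{e_i}_L(z) ≥ G^{e_i}_L(z) − G^{e_i}_L(z − q·e_i). -/

import Mathlib

/-!
Reflect in the hyperplane `{x_i = -1/2}`, whose positive half is `{0 ≤ x_i < L/2}`. As `z_i + q`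
is odd, there are `b, c` in `[0, L/2)` with `-1 - 2b ≡ z_i + q`, `-1 - 2c ≡ z_i - q`, hence
`-1 - b - c ≡ z_i`. Let `u` be `z` with its `i`-th coordinate set to `0` and let `A_p` be
`F²_p ∏ F¹` over the rest of the positive half. Torus symmetry gives `⟨A_p θA_r⟩ = G_L(o, θr - p)`,
so reflection positivity for `B = A_{b e_i} + A_{b e_i + u} - A_{c e_i} - A_{c e_i + u}` reads
`0 ≤ ⟨B θB⟩ = 4 (G^{e_i}(z + q e_i) + G^{e_i}(z - q e_i) - 2 G^{e_i}(z))`.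
-/

namespace RPPaper

/-- The torus `T_L = (ℤ/Lℤ)^d`. -/
abbrev Torus (d L : ℕ) : Type := Fin d → ZMod L

/-- The unit vector `e i`. -/
def unitVec {d L : ℕ} (i : Fin d) : Torus d L := fun k => if k = i then 1 else 0

/-- The point `a • e i` on the torus. -/
def axis {d L : ℕ} (i : Fin d) (a : ZMod L) : Torus d L := fun k => if k = i then a else 0

/-- The integer representative of `a : ZMod L` in the interval `(-L/2, L/2]`. -/
def coordRep (L : ℕ) [NeZero L] (a : ZMod L) : ℤ :=
  if (a.val : ℤ) ≤ (L : ℤ) / 2 then (a.val : ℤ) else (a.val : ℤ) - (L : ℤ)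

/-- The reflection of the torus in the hyperplane `{z : z·e i = t/2}` (here `t = 2m`);
it is a reflection through edges if `t` is odd, and through vertices if `t` is even. -/
def reflect {d L : ℕ} (i : Fin d) (t : ℕ) (x : Torus d L) : Torus d L :=
  Function.update x i ((t : ZMod L) - x i)

/-- The positive half `T_L^+` of the torus associated to the reflection in the hyperplane
`{z : z·e i = t/2}`. -/
def posHalf (d L : ℕ) [NeZero L] (i : Fin d) (t : ℕ) : Finset (Torus d L) :=
  if t % 2 = 1 then Finset.univ.filter (fun x => (x i - (((t + 1) / 2 : ℕ) : ZMod L)).val < L / 2)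
  else Finset.univ.filter (fun x => (x i - ((t / 2 : ℕ) : ZMod L)).val ≤ L / 2)

/-- The negative half `T_L^- = θ(T_L^+)`. -/
def negHalf (d L : ℕ) [NeZero L] (i : Fin d) (t : ℕ) : Finset (Torus d L) :=
  (posHalf d L i t).image (reflect i t)

/-- The state space `S = ∏_{x ∈ T_L} Σ_x` (all local state spaces equal to `Sig`). -/
abbrev MState (d L : ℕ) (Sig : Type*) : Type _ := Torus d L → Sig

/-- `A : S → ℝ` has domain `D` if it depends only on the local states in `D`. -/
def HasDomain {d L : ℕ} {Sig : Type*} (A : MState d L Sig → ℝ) (D : Set (Torus d L)) : Prop :=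
  ∀ w₁ w₂ : MState d L Sig, (∀ x ∈ D, w₁ x = w₂ x) → A w₁ = A w₂

/-- The action `θA (w) = A (θ w)`, where `(θ w) x = w (θ x)`, of the reflection on functions. -/
def reflectFun {d L : ℕ} {Sig : Type*} (i : Fin d) (t : ℕ) (A : MState d L Sig → ℝ) :
    MState d L Sig → ℝ := fun w => A (fun x => w (reflect i t x))

/-- `⟨·⟩` is reflection positive with respect to the reflection in the hyperplane
`{z : z·e i = t/2}`: for all `A, B ∈ A_L^+` (members of the algebra with domain `T_L^+`),
`⟨A·θB⟩ = ⟨B·θA⟩` and `⟨A·θA⟩ ≥ 0`. -/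
def IsRP {d L : ℕ} {Sig : Type*} [NeZero L] (AL : Subalgebra ℝ (MState d L Sig → ℝ))
    (phi : (MState d L Sig → ℝ) →ₗ[ℝ] ℝ) (i : Fin d) (t : ℕ) : Prop :=
  ∀ A B : MState d L Sig → ℝ, A ∈ AL → B ∈ AL →
    HasDomain A ↑(posHalf d L i t) → HasDomain B ↑(posHalf d L i t) →
    phi (A * reflectFun i t B) = phi (B * reflectFun i t A) ∧ 0 ≤ phi (A * reflectFun i t A)

/-- Reflection positivity for all reflections through edges. -/
def RPEdges {d L : ℕ} {Sig : Type*} [NeZero L] (AL : Subalgebra ℝ (MState d L Sig → ℝ))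
    (phi : (MState d L Sig → ℝ) →ₗ[ℝ] ℝ) : Prop :=
  ∀ (i : Fin d) (t : ℕ), t < 2 * L → t % 2 = 1 → IsRP AL phi i t

/-- Reflection positivity for all reflections through vertices. -/
def RPVertices {d L : ℕ} {Sig : Type*} [NeZero L] (AL : Subalgebra ℝ (MState d L Sig → ℝ))
    (phi : (MState d L Sig → ℝ) →ₗ[ℝ] ℝ) : Prop :=
  ∀ (i : Fin d) (t : ℕ), t < 2 * L → t % 2 = 0 → IsRP AL phi i t

/-- The single-site function `F^j_x`, obtained from a function `f : Sig → ℝ` of the local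
state at the origin by the (path-independent) sequence of reflections sending `o` to `x`. -/
def site {d L : ℕ} {Sig : Type*} (f : Sig → ℝ) (x : Torus d L) : MState d L Sig → ℝ :=
  fun w => f (w x)

/-- The two-point function `G_L(x,y) = ⟨F²_x F²_y ∏_{z ≠ x,y} F¹_z⟩`. -/
noncomputable def twoPoint {d L : ℕ} {Sig : Type*} [NeZero L]
    (phi : (MState d L Sig → ℝ) →ₗ[ℝ] ℝ) (f1 f2 : Sig → ℝ) (x y : Torus d L) : ℝ :=
  phi (fun w => f2 (w x) * f2 (w y) * ∏ z ∈ (Finset.univ.erase x).erase y, f1 (w z))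

/-- Torus symmetry: `⟨∏_{x∈A}F¹_x ∏_{x∈B}F²_x⟩ = ⟨∏_{x∈A+z}F¹_x ∏_{x∈B+z}F²_x⟩`. -/
def TorusSymmetric {d L : ℕ} {Sig : Type*} [NeZero L]
    (phi : (MState d L Sig → ℝ) →ₗ[ℝ] ℝ) (f1 f2 : Sig → ℝ) : Prop :=
  ∀ (A B : Finset (Torus d L)) (z : Torus d L),
    phi (fun w => (∏ x ∈ A, f1 (w x)) * ∏ x ∈ B, f2 (w x)) =
      phi (fun w => (∏ x ∈ A, f1 (w (x + z))) * ∏ x ∈ B, f2 (w (x + z)))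


/-- The function `G^{e i}_L(x) := ½ (G_L(o,x) + G_L(o, (x·e i) e i))`. -/
noncomputable def axisAvg {d L : ℕ} {Sig : Type*} [NeZero L]
    (phi : (MState d L Sig → ℝ) →ₗ[ℝ] ℝ) (f1 f2 : Sig → ℝ) (i : Fin d) (x : Torus d L) : ℝ :=
  (twoPoint phi f1 f2 0 x + twoPoint phi f1 f2 0 (axis i (x i))) / 2

open Finset

section Reflection

variable {d L : ℕ}

lemma axis_eq_single (i : Fin d) (a : ZMod L) : axis i a = Pi.single i a := by
  funext k
  simp [axis, Pi.single_apply]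

@[simp]
lemma axis_apply_self (i : Fin d) (a : ZMod L) : axis i a i = a := by
  simp [axis]

lemma reflect_apply_self (i : Fin d) (t : ℕ) (x : Torus d L) :
    reflect i t x i = t - x i := by
  simp [reflect]

lemma reflect_apply_of_ne (i : Fin d) (t : ℕ) (x : Torus d L) {k : Fin d} (hk : k ≠ i) :
    reflect i t x k = x k := by
  simp [reflect, hk]

lemma reflect_involutive (i : Fin d) (t : ℕ) : Function.Involutive (reflect (L := L) i t) := by
  intro x
  simp [reflect]

variable [NeZero L]

lemma _root_.ZMod.val_neg_one_sub (c : ZMod L) : (-1 - c).val = L - 1 - c.val := by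
  have hc : c.val < L := ZMod.val_lt c
  have hcast : ((L - 1 - c.val : ℕ) : ZMod L) = -1 - c := by
    have h := congrArg (Nat.cast : ℕ → ZMod L) (show L - 1 - c.val + c.val + 1 = L by omega)
    push_cast at h
    rw [ZMod.natCast_self, ZMod.natCast_val, ZMod.cast_id] at h
    linear_combination h
  rw [← hcast, ZMod.val_natCast, Nat.mod_eq_of_lt (by omega)]

lemma reflect_mem_posHalf_iff (hL : Even L) (i : Fin d) {t : ℕ} (ht : t % 2 = 1)
    (x : Torus d L) : reflect i t x ∈ posHalf d L i t ↔ x ∉ posHalf d L i t := by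
  simp only [posHalf, ht, if_true, mem_filter, mem_univ, true_and, reflect_apply_self]
  set c : ZMod L := (((t + 1) / 2 : ℕ) : ZMod L)
  have htc : (t : ZMod L) = 2 * c - 1 := by
    have h := congrArg (Nat.cast : ℕ → ZMod L) (show t + 1 = 2 * ((t + 1) / 2) by omega)
    push_cast at h
    linear_combination h
  have hv := ZMod.val_lt (x i - c)
  obtain ⟨k, hk⟩ := hL
  rw [show (t : ZMod L) - x i - c = -1 - (x i - c) by rw [htc]; ring, ZMod.val_neg_one_sub]
  omega

lemma mem_posHalf_two_mul_sub_one_iff (i : Fin d) (x : Torus d L) :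
    x ∈ posHalf d L i (2 * L - 1) ↔ (x i).val < L / 2 := by
  have hL0 := NeZero.pos L
  simp [posHalf, show (2 * L - 1) % 2 = 1 by omega, show (2 * L - 1 + 1) / 2 = L by omega]

lemma reflect_two_mul_sub_one_axis_add (i : Fin d) (b : ZMod L) {w : Torus d L} (hw : w i = 0) :
    reflect i (2 * L - 1) (axis i b + w) = axis i (-1 - b) + w := by
  have hL0 := NeZero.pos L
  have hcast : ((2 * L - 1 : ℕ) : ZMod L) = -1 := by
    have h := congrArg (Nat.cast : ℕ → ZMod L) (show 2 * L - 1 + 1 = 2 * L by omega)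
    push_cast at h
    rw [ZMod.natCast_self] at h
    linear_combination h
  funext k
  by_cases hk : k = i
  · subst hk
    simp [reflect_apply_self, hcast, axis, hw]
  · simp [reflect_apply_of_ne _ _ _ hk, axis, hk]

lemma axis_add_mem_posHalf (i : Fin d) {a : ℕ} (ha : a < L / 2) {v : Torus d L} (hv : v i = 0) :
    axis i (a : ZMod L) + v ∈ posHalf d L i (2 * L - 1) := by
  rw [mem_posHalf_two_mul_sub_one_iff]
  simpa [axis, hv, ZMod.val_natCast, Nat.mod_eq_of_lt (show a < L by omega)] using ha

end Reflection

section ReflectionPositivity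

variable {d L : ℕ} {Sig : Type*}

lemma reflectFun_sum_smul (i : Fin d) (t : ℕ) {ι : Type*} (s : Finset ι) (c : ι → ℝ)
    (A : ι → MState d L Sig → ℝ) :
    reflectFun i t (∑ p ∈ s, c p • A p) = ∑ p ∈ s, c p • reflectFun i t (A p) := by
  funext w
  simp [reflectFun, Finset.sum_apply]

lemma HasDomain.sum_smul {ι : Type*} {s : Finset ι} {A : ι → MState d L Sig → ℝ}
    {D : Set (Torus d L)} (hA : ∀ p ∈ s, HasDomain (A p) D) (c : ι → ℝ) :
    HasDomain (∑ p ∈ s, c p • A p) D := by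
  intro w₁ w₂ hw
  simp only [Finset.sum_apply, Pi.smul_apply]
  exact Finset.sum_congr rfl fun p hp => by rw [hA p hp w₁ w₂ hw]

variable [NeZero L]

/-- `⟨B θB⟩ ≥ 0` for `B = ∑ c_p A_p`. -/
lemma IsRP.quadraticForm_nonneg {AL : Subalgebra ℝ (MState d L Sig → ℝ)}
    {phi : (MState d L Sig → ℝ) →ₗ[ℝ] ℝ} {i : Fin d} {t : ℕ} (h : IsRP AL phi i t)
    {ι : Type*} [Fintype ι] (c : ι → ℝ) {A : ι → MState d L Sig → ℝ} (hA : ∀ p, A p ∈ AL)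
    (hD : ∀ p, HasDomain (A p) ↑(posHalf d L i t)) :
    0 ≤ ∑ p, ∑ r, c p * c r * phi (A p * reflectFun i t (A r)) := by
  have hB : ∑ p, c p • A p ∈ AL := sum_mem fun p _ => Subalgebra.smul_mem _ (hA p) _
  have hDB := HasDomain.sum_smul (s := univ) (fun p _ => hD p) c
  have hpos := (h _ _ hB hB hDB hDB).2
  simpa only [reflectFun_sum_smul, Finset.sum_mul_sum, smul_mul_smul, map_sum, map_smul,
    smul_eq_mul] using hpos

end ReflectionPositivity

section Insertion

variable {d L : ℕ} {Sig : Type*} {phi : (MState d L Sig → ℝ) →ₗ[ℝ] ℝ}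
  {f1 f2 : Sig → ℝ}

noncomputable def insertion (f1 f2 : Sig → ℝ) (P : Finset (Torus d L)) (p : Torus d L) :
    MState d L Sig → ℝ :=
  site f2 p * ∏ y ∈ P.erase p, site f1 y

lemma insertion_mem {AL : Subalgebra ℝ (MState d L Sig → ℝ)} (hF1 : ∀ x, site f1 x ∈ AL)
    (hF2 : ∀ x, site f2 x ∈ AL) (P : Finset (Torus d L)) (p : Torus d L) :
    insertion f1 f2 P p ∈ AL :=
  mul_mem (hF2 p) (prod_mem fun y _ => hF1 y)

lemma hasDomain_insertion {P : Finset (Torus d L)} {p : Torus d L} (hp : p ∈ P) :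
    HasDomain (insertion f1 f2 P p) ↑P := by
  intro w₁ w₂ hw
  simp only [insertion, Pi.mul_apply, site, Finset.prod_apply]
  rw [hw p hp, prod_congr rfl fun y hy => by rw [hw y (mem_of_mem_erase hy)]]

variable [NeZero L]

lemma twoPoint_add_add (hsym : TorusSymmetric phi f1 f2) {x y : Torus d L} (hxy : x ≠ y)
    (v : Torus d L) : twoPoint phi f1 f2 (x + v) (y + v) = twoPoint phi f1 f2 x y := by
  have h := hsym ((univ.erase x).erase y) {x, y} v
  have hshift : ∀ w : MState d L Sig, ∏ p ∈ (univ.erase x).erase y, f1 (w (p + v)) =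
      ∏ p ∈ (univ.erase (x + v)).erase (y + v), f1 (w p) := fun w =>
    prod_equiv (Equiv.addRight v) (by simp) (by simp)
  simp only [prod_pair hxy, hshift] at h
  unfold twoPoint
  convert h.symm using 2 <;> funext w <;> ring

/-- The reflected insertion lives on the complementary half, so the product is the full
configuration with the two `F²` at `p` and `θ r`. -/
lemma insertion_mul_reflectFun_insertion (hL : Even L) {i : Fin d} {t : ℕ} (ht : t % 2 = 1)
    {p r : Torus d L} (hp : p ∈ posHalf d L i t) (hr : r ∈ posHalf d L i t) :
    phi (insertion f1 f2 (posHalf d L i t) p *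
        reflectFun i t (insertion f1 f2 (posHalf d L i t) r)) =
      twoPoint phi f1 f2 p (reflect i t r) := by
  set P := posHalf d L i t
  have hinv := reflect_involutive (L := L) i t
  have hθ : ∀ y, reflect i t y ∈ P ↔ y ∉ P := reflect_mem_posHalf_iff hL i ht
  have hθr : reflect i t r ∉ P := fun h => (hθ r).1 h hr
  have hreflected : ∀ w : MState d L Sig, ∏ y ∈ P.erase r, f1 (w (reflect i t y)) =
      ∏ y ∈ Pᶜ.erase (reflect i t r), f1 (w y) := fun w =>
    prod_equiv hinv.toPerm (by simp [hinv.injective.eq_iff, hθ]) (by simp)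
  have hsplit : (univ.erase p).erase (reflect i t r) = P.erase p ∪ Pᶜ.erase (reflect i t r) := by
    ext x
    simp only [mem_erase, mem_univ, and_true, mem_union, mem_compl]
    by_cases hx : x ∈ P <;> grind
  have hdisj : Disjoint (P.erase p) (Pᶜ.erase (reflect i t r)) :=
    (disjoint_compl_right (a := P)).mono (erase_subset _ _) (erase_subset _ _)
  unfold twoPoint
  congr 1
  funext w
  simp only [insertion, reflectFun, site, Pi.mul_apply, Finset.prod_apply, hreflected, hsplit,
    prod_union hdisj]
  ring

lemma insertion_mul_reflectFun_insertion_eq_twoPoint_zero (hL : Even L)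
    (hsym : TorusSymmetric phi f1 f2) {i : Fin d} {t : ℕ} (ht : t % 2 = 1)
    {p r : Torus d L} (hp : p ∈ posHalf d L i t) (hr : r ∈ posHalf d L i t) :
    phi (insertion f1 f2 (posHalf d L i t) p *
        reflectFun i t (insertion f1 f2 (posHalf d L i t) r)) =
      twoPoint phi f1 f2 0 (reflect i t r - p) := by
  have hne : p ≠ reflect i t r := fun h => (reflect_mem_posHalf_iff hL i ht r).1 (h ▸ hp) hr
  rw [insertion_mul_reflectFun_insertion hL ht hp hr, ← twoPoint_add_add hsym hne (-p),
    add_neg_cancel, sub_eq_add_neg]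

end Insertion

section AxisEntries

variable {d L : ℕ} [NeZero L] {Sig : Type*} {phi : (MState d L Sig → ℝ) →ₗ[ℝ] ℝ}
  {f1 f2 : Sig → ℝ} {i : Fin d} {a b : ℕ} {v w : Torus d L}

lemma insertion_axis_add_mul_reflectFun (hL : Even L) (hsym : TorusSymmetric phi f1 f2)
    (ha : a < L / 2) (hb : b < L / 2) (hv : v i = 0) (hw : w i = 0) :
    phi (insertion f1 f2 (posHalf d L i (2 * L - 1)) (axis i (a : ZMod L) + v) *
        reflectFun i (2 * L - 1)
          (insertion f1 f2 (posHalf d L i (2 * L - 1)) (axis i (b : ZMod L) + w))) =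
      twoPoint phi f1 f2 0 (axis i (-1 - (a : ZMod L) - (b : ZMod L)) + (w - v)) := by
  have hL0 := NeZero.pos L
  rw [insertion_mul_reflectFun_insertion_eq_twoPoint_zero hL hsym (by omega)
    (axis_add_mem_posHalf i ha hv) (axis_add_mem_posHalf i hb hw),
    reflect_two_mul_sub_one_axis_add i _ hw]
  simp only [axis_eq_single, Pi.single_sub]
  congr 1
  abel

lemma twoPoint_zero_axis_add_sub_comm {AL : Subalgebra ℝ (MState d L Sig → ℝ)}
    (hRP : IsRP AL phi i (2 * L - 1)) (hF1 : ∀ x, site f1 x ∈ AL) (hF2 : ∀ x, site f2 x ∈ AL)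
    (hL : Even L) (hsym : TorusSymmetric phi f1 f2)
    (ha : a < L / 2) (hb : b < L / 2) (hv : v i = 0) (hw : w i = 0) :
    twoPoint phi f1 f2 0 (axis i (-1 - (a : ZMod L) - (b : ZMod L)) + (w - v)) =
      twoPoint phi f1 f2 0 (axis i (-1 - (a : ZMod L) - (b : ZMod L)) + (v - w)) := by
  rw [← insertion_axis_add_mul_reflectFun hL hsym ha hb hv hw,
    (hRP _ _ (insertion_mem hF1 hF2 _ _) (insertion_mem hF1 hF2 _ _)
      (hasDomain_insertion (axis_add_mem_posHalf i ha hv))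
      (hasDomain_insertion (axis_add_mem_posHalf i hb hw))).1,
    insertion_axis_add_mul_reflectFun hL hsym hb ha hw hv, sub_right_comm]

end AxisEntries

lemma exists_reflection_offsets {L : ℕ} (hL : Even L) {a q : ℕ} (hodd : Odd (a + q))
    (hlo : q < a) (hhi : a + q < L) :
    ∃ b c : ℕ, b < L / 2 ∧ c < L / 2 ∧ (-1 - b - b : ZMod L) = a + q ∧
      (-1 - c - c : ZMod L) = a - q ∧ (-1 - b - c : ZMod L) = a := by
  have key : ∀ m n s r : ℕ, m + n + 1 + s = L + r → (-1 - m - n : ZMod L) = s - r := by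
    intro m n s r h
    have h' := congrArg (Nat.cast : ℕ → ZMod L) h
    push_cast at h'
    rw [ZMod.natCast_self] at h'
    linear_combination -h'
  obtain ⟨k, hk⟩ := hL
  obtain ⟨j, hj⟩ := hodd
  refine ⟨(L - 1 - a - q) / 2, (L + q - 1 - a) / 2, by omega, by omega, ?_, ?_, ?_⟩
  · simpa using key _ _ (a + q) 0 (by omega)
  · exact key _ _ a q (by omega)
  · simpa using key _ _ a 0 (by omega)

lemma two_mul_twoPoint_axis_le {d L : ℕ} [NeZero L] {Sig : Type*}
    {AL : Subalgebra ℝ (MState d L Sig → ℝ)} {phi : (MState d L Sig → ℝ) →ₗ[ℝ] ℝ}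
    {f1 f2 : Sig → ℝ} {i : Fin d} (hRP : IsRP AL phi i (2 * L - 1))
    (hF1 : ∀ x, site f1 x ∈ AL) (hF2 : ∀ x, site f2 x ∈ AL) (hL : Even L)
    (hsym : TorusSymmetric phi f1 f2) {b c : ℕ} (hb : b < L / 2) (hc : c < L / 2)
    {u : Torus d L} (hu : u i = 0) :
    2 * (twoPoint phi f1 f2 0 (axis i (-1 - (b : ZMod L) - (c : ZMod L))) +
        twoPoint phi f1 f2 0 (axis i (-1 - (b : ZMod L) - (c : ZMod L)) + u)) ≤
      twoPoint phi f1 f2 0 (axis i (-1 - (b : ZMod L) - (b : ZMod L))) +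
        twoPoint phi f1 f2 0 (axis i (-1 - (b : ZMod L) - (b : ZMod L)) + u) +
      (twoPoint phi f1 f2 0 (axis i (-1 - (c : ZMod L) - (c : ZMod L))) +
        twoPoint phi f1 f2 0 (axis i (-1 - (c : ZMod L) - (c : ZMod L)) + u)) := by
  set a : Fin 4 → ℕ := ![b, b, c, c]
  set v : Fin 4 → Torus d L := ![0, u, 0, u]
  have ha : ∀ k, a k < L / 2 := by intro k; fin_cases k <;> assumption
  have hv : ∀ k, v k i = 0 := by intro k; fin_cases k <;> simp [v, hu]
  have hform := hRP.quadraticForm_nonneg ![1, 1, -1, -1]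
    (fun k => insertion_mem hF1 hF2 _ (axis i (a k : ZMod L) + v k))
    (fun k => hasDomain_insertion (axis_add_mem_posHalf i (ha k) (hv k)))
  simp only [insertion_axis_add_mul_reflectFun hL hsym (ha _) (ha _) (hv _) (hv _)] at hform
  simp only [Fin.sum_univ_four, Fin.isValue, Matrix.cons_val_zero, Matrix.cons_val_one,
    Matrix.cons_val, mul_one, one_mul, mul_neg, neg_mul, neg_neg, neg_zero, zero_sub, sub_zero,
    sub_self, add_zero, a, v] at hform
  have hflip : ∀ {m n : ℕ}, m < L / 2 → n < L / 2 →
      twoPoint phi f1 f2 0 (axis i (-1 - (m : ZMod L) - (n : ZMod L)) + -u) =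
        twoPoint phi f1 f2 0 (axis i (-1 - (m : ZMod L) - (n : ZMod L)) + u) := fun hm hn => by
    simpa using twoPoint_zero_axis_add_sub_comm hRP hF1 hF2 hL hsym hm hn hu (w := 0) rfl
  simp only [hflip hb hb, hflip hb hc, hflip hc hc, sub_right_comm _ (c : ZMod L)] at hform
  linarith

theorem statement9_general {d L : ℕ} [NeZero L] (hL : Even L) {Sig : Type*}
    (AL : Subalgebra ℝ (MState d L Sig → ℝ))
    (phi : (MState d L Sig → ℝ) →ₗ[ℝ] ℝ)
    (f1 f2 : Sig → ℝ)
    (hF1 : ∀ x : Torus d L, site f1 x ∈ AL) (hF2 : ∀ x : Torus d L, site f2 x ∈ AL)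
    (hRP : RPEdges AL phi) (hsym : TorusSymmetric phi f1 f2)
    (i : Fin d) (z : Torus d L) (q : ℕ)
    (hodd : Odd ((z i).val + q)) (hlo : q < (z i).val) (hhi : (z i).val + q < L) :
    axisAvg phi f1 f2 i z - axisAvg phi f1 f2 i (z - axis i (q : ZMod L)) ≤
      axisAvg phi f1 f2 i (z + axis i (q : ZMod L)) - axisAvg phi f1 f2 i z := by
  obtain ⟨b, c, hb, hc, hbb, hcc, hbc⟩ := exists_reflection_offsets hL hodd hlo hhi
  rw [ZMod.natCast_zmod_val] at hbb hcc hbc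
  have hRPi : IsRP AL phi i (2 * L - 1) := hRP i _ (by omega) (by have := NeZero.pos L; omega)
  set u := z - axis i (z i)
  have hconvex := two_mul_twoPoint_axis_le hRPi hF1 hF2 hL hsym hb hc (u := u) (by simp [u])
  obtain ⟨hplus, hminus, hzero⟩ : axis i (z i + (q : ZMod L)) + u = z + axis i (q : ZMod L) ∧
      axis i (z i - (q : ZMod L)) + u = z - axis i (q : ZMod L) ∧ axis i (z i) + u = z := by
    simp only [u, axis_eq_single, Pi.single_add, Pi.single_sub]
    exact ⟨by abel, by abel, by abel⟩
  rw [hbb, hcc, hbc, hplus, hminus, hzero] at hconvex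
  simp only [axisAvg, Pi.add_apply, Pi.sub_apply, axis_apply_self]
  linarith

/-- If `⟨·⟩` is reflection positive for reflections through edges and the two-point function is
torus symmetric, then for `z·e i + q` odd with `z·e i ± q ∈ (0, L)`,
`G^{e i}_L(z + q e i) − G^{e i}_L(z) ≥ G^{e i}_L(z) − G^{e i}_L(z − q e i)`. -/
theorem statement9 {d L : ℕ} [NeZero L] (hd : 2 ≤ d) (hL : Even L) {Sig : Type*}
    (AL : Subalgebra ℝ (MState d L Sig → ℝ)) (hfin : FiniteDimensional ℝ AL)
    (phi : (MState d L Sig → ℝ) →ₗ[ℝ] ℝ) (hone : phi 1 = 1)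
    (f1 f2 : Sig → ℝ)
    (hF1 : ∀ x : Torus d L, site f1 x ∈ AL) (hF2 : ∀ x : Torus d L, site f2 x ∈ AL)
    (hRP : RPEdges AL phi) (hsym : TorusSymmetric phi f1 f2)
    (i : Fin d) (z : Torus d L) (q : ℕ) (hq : 1 ≤ q)
    (hodd : Odd ((z i).val + q)) (hlo : q < (z i).val) (hhi : (z i).val + q < L) :
    axisAvg phi f1 f2 i z - axisAvg phi f1 f2 i (z - axis i (q : ZMod L)) ≤
      axisAvg phi f1 f2 i (z + axis i (q : ZMod L)) - axisAvg phi f1 f2 i z :=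
  statement9_general hL AL phi f1 f2 hF1 hF2 hRP hsym i z q hodd hlo hhi

end RPPaper
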